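/- arXiv:1403.3775 — 5 statements merged into one kernel-verified Lean document; each statement's English description precedes it below -/
import Mathlib

section
/- For every natural number m and every natural number j with 0 ≤ j ≤ m−1, the sum ∑_{k=0}^{m−j−1} (−1)^k · C(2m−j, m+k+1) · C(m+k, k) equals 1. -/
/-!
Write `S m n = ∑_{k<n} (-1)^k C(m+n, m+k+1) C(m+k, k)`. Pascal's rule on the first factor gives
`S m (n+1) = S m n + ∑_{k≤n} (-1)^k C(m+n, m+k) C(m+k, k)`, and since
`C(m+n, m+k) C(m+k, k) = C(m+n, m) C(n, k)` the last sum is `C(m+n, m) (1 - 1)^n = 0` for `n ≠ 0`.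
Hence `S m n = S m 1 = 1` for all `n ≥ 1`; the theorem is the case `n = m - j`.
-/

open Finset

theorem Nat.add_choose_add_mul_add_choose (m n k : ℕ) (hk : k ≤ n) :
    (m + n).choose (m + k) * (m + k).choose k = (m + n).choose m * n.choose k := by
  rw [← Nat.choose_symm_add, Nat.choose_mul (Nat.le_add_right m k)]
  congr 2 <;> omega

theorem Int.alternating_sum_range_add_choose_add_mul_add_choose (m : ℕ) {n : ℕ} (hn : n ≠ 0) :
    ∑ k ∈ Finset.range (n + 1), (-1 : ℤ) ^ k * ((m + n).choose (m + k) : ℤ) * ((m + k).choose k : ℤ)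
      = 0 := by
  calc ∑ k ∈ Finset.range (n + 1), (-1 : ℤ) ^ k * ((m + n).choose (m + k) : ℤ) * ((m + k).choose k : ℤ)
      = ∑ k ∈ Finset.range (n + 1), ((m + n).choose m : ℤ) * ((-1 : ℤ) ^ k * (n.choose k : ℤ)) := by
        refine sum_congr rfl fun k hk => ?_
        have hkn : k ≤ n := Nat.lt_succ_iff.mp (mem_range.mp hk)
        rw [mul_assoc, ← Nat.cast_mul, Nat.add_choose_add_mul_add_choose m n k hkn]
        push_cast
        ring
    _ = 0 := by rw [← mul_sum, Int.alternating_sum_range_choose_of_ne hn, mul_zero]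

theorem Int.alternating_sum_range_add_choose_add_succ_mul_add_choose (m : ℕ) {n : ℕ}
    (hn : 1 ≤ n) :
    ∑ k ∈ Finset.range n, (-1 : ℤ) ^ k * ((m + n).choose (m + k + 1) : ℤ) * ((m + k).choose k : ℤ)
      = 1 := by
  induction n, hn using Nat.le_induction with
  | base => simp
  | succ n hn ih =>
    have pascal : ∀ k, (m + (n + 1)).choose (m + k + 1)
        = (m + n).choose (m + k + 1) + (m + n).choose (m + k) := fun k => by
      rw [← add_assoc, Nat.choose_succ_succ', add_comm ((m + n).choose (m + k))]
    have top_vanishes : (m + n).choose (m + n + 1) = 0 := Nat.choose_succ_self (m + n)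
    simp_rw [pascal, Nat.cast_add, mul_add, add_mul, sum_add_distrib,
      Int.alternating_sum_range_add_choose_add_mul_add_choose m (by omega : n ≠ 0),
      sum_range_succ _ n, ih, top_vanishes]
    simp

/-- For every `m` and every `j` with `0 ≤ j ≤ m - 1`,
`∑_{k=0}^{m-j-1} (-1)^k C(2m-j, m+k+1) C(m+k, k) = 1`. -/
theorem binom_alternating_sum_reindexed (m j : ℕ) (hj : j + 1 ≤ m) :
    ∑ k ∈ Finset.range (m - j),
      (-1 : ℤ) ^ k * ((2 * m - j).choose (m + k + 1) : ℤ) * ((m + k).choose k : ℤ) = 1 := by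
  rw [show 2 * m - j = m + (m - j) by omega]
  exact Int.alternating_sum_range_add_choose_add_succ_mul_add_choose m (by omega)
end

section
/- Let x = x₀ + x₁e₁ + ... + xₙeₙ be a paravector in the Clifford algebra ℝₙ and let s be a paravector with x ∉ [s] (i.e., s² − 2Re(x)s + |x|² is invertible and x² − 2Re(s)x + |s|² is invertible). Then −(x² − 2x Re(s) + |s|²)^{-1}(x − s̄) = (s − x̄)(s² − 2Re(x)s + |x|²)^{-1}. -/
/-- The negative-definite quadratic form on `ℝⁿ`, so that
`CliffordAlgebra (QnegDef n)` is the real Clifford algebra `ℝₙ` with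
`eᵢeⱼ + eⱼeᵢ = -2δᵢⱼ`. -/
noncomputable abbrev QnegDef (n : ℕ) : QuadraticForm ℝ (Fin n → ℝ) :=
  QuadraticMap.weightedSumSquares ℝ (fun _ : Fin n => (-1 : ℝ))

/-- The paravector `x₀ + ∑ xᵢ eᵢ` in the Clifford algebra `ℝₙ`. -/
noncomputable def paravec (n : ℕ) (x0 : ℝ) (v : Fin n → ℝ) : CliffordAlgebra (QnegDef n) :=
  algebraMap ℝ _ x0 + CliffordAlgebra.ι (QnegDef n) v

/-- The conjugate paravector `x₀ - ∑ xᵢ eᵢ`. -/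
noncomputable def paraconj (n : ℕ) (x0 : ℝ) (v : Fin n → ℝ) : CliffordAlgebra (QnegDef n) :=
  algebraMap ℝ _ x0 - CliffordAlgebra.ι (QnegDef n) v

private lemma key_alg {A : Type*} [Ring A] [Algebra ℝ A] (x0 s0 qx qw : ℝ) (X W : A)
    (hX : X * X = algebraMap ℝ A (-qx)) (hW : W * W = algebraMap ℝ A (-qw)) :
    (algebraMap ℝ A x0 + X - (algebraMap ℝ A s0 - W)) *
      ((algebraMap ℝ A s0 + W) * (algebraMap ℝ A s0 + W)
        - (2 * x0) • (algebraMap ℝ A s0 + W) + algebraMap ℝ A (x0 ^ 2 + qx))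
    = -(((algebraMap ℝ A x0 + X) * (algebraMap ℝ A x0 + X)
        - (2 * s0) • (algebraMap ℝ A x0 + X) + algebraMap ℝ A (s0 ^ 2 + qw)) *
        ((algebraMap ℝ A s0 + W) - (algebraMap ℝ A x0 - X))) := by
  have h1 : ∀ r : ℝ, algebraMap ℝ A r = r • (1 : A) := fun r => Algebra.algebraMap_eq_smul_one r
  simp only [h1] at *
  simp only [mul_add, add_mul, sub_mul, mul_sub, neg_mul, mul_neg, smul_mul_assoc,
    mul_smul_comm, one_mul, mul_one, smul_smul, hX, hW, neg_smul, smul_add, smul_sub, smul_neg]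
  module

private lemma ι_sq (n : ℕ) (v : Fin n → ℝ) :
    CliffordAlgebra.ι (QnegDef n) v * CliffordAlgebra.ι (QnegDef n) v
      = algebraMap ℝ _ (-(∑ i, v i ^ 2)) := by
  rw [CliffordAlgebra.ι_sq_scalar]
  congr 1
  simp [QuadraticMap.weightedSumSquares_apply]
  ring_nf

/-- Identity of the two forms of the left slice-monogenic Cauchy kernel:
for paravectors `x = x₀ + v`, `s = s₀ + w` with both quadratic elements invertible
(`u1` a two-sided inverse of `x² - 2 Re(s) x + |s|²` and `u2` a two-sided inverse of
`s² - 2 Re(x) s + |x|²`), one has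
`-(x² - 2 Re(s) x + |s|²)⁻¹ (x - s̄) = (s - x̄)(s² - 2 Re(x) s + |x|²)⁻¹`. -/
theorem cauchy_kernel_form_I_eq_form_II (n : ℕ) (x0 s0 : ℝ) (v w : Fin n → ℝ)
    (u1 u2 : CliffordAlgebra (QnegDef n))
    (h1a : (paravec n x0 v * paravec n x0 v - (2 * s0) • paravec n x0 v +
        algebraMap ℝ _ (s0 ^ 2 + ∑ i, w i ^ 2)) * u1 = 1)
    (h1b : u1 * (paravec n x0 v * paravec n x0 v - (2 * s0) • paravec n x0 v +
        algebraMap ℝ _ (s0 ^ 2 + ∑ i, w i ^ 2)) = 1)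
    (h2a : (paravec n s0 w * paravec n s0 w - (2 * x0) • paravec n s0 w +
        algebraMap ℝ _ (x0 ^ 2 + ∑ i, v i ^ 2)) * u2 = 1)
    (h2b : u2 * (paravec n s0 w * paravec n s0 w - (2 * x0) • paravec n s0 w +
        algebraMap ℝ _ (x0 ^ 2 + ∑ i, v i ^ 2)) = 1) :
    -(u1 * (paravec n x0 v - paraconj n s0 w)) =
      (paravec n s0 w - paraconj n x0 v) * u2 := by
  set px := paravec n x0 v with hpx
  set ps := paravec n s0 w with hps
  set cx := paraconj n x0 v with hcx
  set cs := paraconj n s0 w with hcs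
  set B := ps * ps - (2 * x0) • ps + algebraMap ℝ _ (x0 ^ 2 + ∑ i, v i ^ 2) with hB
  set A := px * px - (2 * s0) • px + algebraMap ℝ _ (s0 ^ 2 + ∑ i, w i ^ 2) with hA
  have key : (px - cs) * B = -(A * (ps - cx)) := by
    rw [hpx, hps, hcx, hcs, hB, hA]
    simp only [paravec, paraconj]
    exact key_alg x0 s0 (∑ i, v i ^ 2) (∑ i, w i ^ 2) _ _ (ι_sq n v) (ι_sq n w)
  have e1 : px - cs = (px - cs) * (B * u2) := by rw [h2a, mul_one]
  conv_lhs => rw [e1]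
  rw [← mul_assoc (px - cs), key, neg_mul, mul_neg, neg_neg, ← mul_assoc u1,
    ← mul_assoc u1 A, h1b, one_mul]
end

section
/- Let V be a Banach module over the Clifford algebra ℝₙ (n odd), let T = T₀ + e₁T₁ + ... + eₙTₙ with bounded commuting real components, and let Q_s(T) = (s²I − s(T + T̄) + T T̄)^{-1} for s in the F-resolvent set. Define the left F-resolvent F_n^L(s,T) = γₙ (sI − T̄) Q_s(T)^{(n+1)/2}. Then F_n^L(s,T)·s − T·F_n^L(s,T) = γₙ Q_s(T)^{(n−1)/2}. -/
/-- The constant `γₙ = (-1)^((n-1)/2) 2^(n-1) (((n-1)/2)!)²`. -/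
noncomputable def gammaN (n : ℕ) : ℝ :=
  (-1) ^ ((n - 1) / 2) * 2 ^ (n - 1) * ((((n - 1) / 2).factorial : ℝ)) ^ 2

/-- The left F-resolvent equation: with `n` odd, `T` a paravector operator with commuting
components, `Tb = T̄`, `Q = Q_s(T)` a two-sided inverse of `s²I - s(T+T̄) + TT̄`, and `s`
commuting with `T+T̄`, `TT̄` and `Q` (as holds for paravector scalars against operators with
commuting real components), the left F-resolvent
`F_n^L(s,T) = γₙ (s - T̄) Q^((n+1)/2)` satisfies
`F_n^L(s,T) s - T F_n^L(s,T) = γₙ Q^((n-1)/2)`. -/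
theorem left_F_resolvent_equation {R : Type*} [Ring R] [Algebra ℝ R] (n : ℕ) (hn : Odd n)
    (s T Tb Q : R)
    (hsT : s * (T + Tb) = (T + Tb) * s)
    (hsTT : s * (T * Tb) = (T * Tb) * s)
    (hsQ : s * Q = Q * s)
    (hTQ : T * Q = Q * T)
    (hTbQ : Tb * Q = Q * Tb)
    (hQ1 : Q * (s * s - s * (T + Tb) + T * Tb) = 1)
    (hQ2 : (s * s - s * (T + Tb) + T * Tb) * Q = 1) :
    (gammaN n • ((s - Tb) * Q ^ ((n + 1) / 2))) * s -
      T * (gammaN n • ((s - Tb) * Q ^ ((n + 1) / 2))) =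
    gammaN n • Q ^ ((n - 1) / 2) := by
  obtain ⟨m, rfl⟩ := hn
  have h1 : (2 * m + 1 + 1) / 2 = m + 1 := by omega
  have h2 : (2 * m + 1 - 1) / 2 = m := by omega
  rw [h1, h2]
  have hc : Commute s Q := hsQ
  have hQms : Q ^ (m + 1) * s = s * Q ^ (m + 1) := (hc.pow_right (m + 1)).symm.eq
  have key : (s - Tb) * Q ^ (m + 1) * s - T * ((s - Tb) * Q ^ (m + 1)) = Q ^ m := by
    have : (s - Tb) * Q ^ (m + 1) * s - T * ((s - Tb) * Q ^ (m + 1))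
        = ((s - Tb) * s - T * (s - Tb)) * Q ^ (m + 1) := by
      rw [mul_assoc, hQms]
      noncomm_ring
    rw [this]
    have hexp : (s - Tb) * s - T * (s - Tb) = s * s - s * (T + Tb) + T * Tb := by
      rw [hsT]; noncomm_ring
    rw [hexp, pow_succ', ← mul_assoc, hQ2, one_mul]
  rw [smul_mul_assoc, mul_smul_comm, ← smul_sub, key]
end

section
/- Generalized left F-resolvent equation: with n odd, T as above, s ∈ ρ_F(T), and M_m^L(s,T) := γₙ ∑_{i=0}^{m−1} T^i Q_s(T)^{(n−1)/2} s^{m−1−i}, one has T^m F_n^L(s,T) = F_n^L(s,T) s^m − M_m^L(s,T) for every m ∈ ℕ. -/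
/-- Generalized left F-resolvent equation: with `n` odd and the same setting as the left
F-resolvent equation, for every `m ∈ ℕ`,
`T^m F_n^L(s,T) = F_n^L(s,T) s^m - γₙ ∑_{i=0}^{m-1} T^i Q^((n-1)/2) s^(m-1-i)`. -/
theorem generalized_left_F_resolvent_equation {R : Type*} [Ring R] [Algebra ℝ R]
    (n : ℕ) (hn : Odd n) (s T Tb Q : R)
    (hsT : s * (T + Tb) = (T + Tb) * s)
    (hsTT : s * (T * Tb) = (T * Tb) * s)
    (hsQ : s * Q = Q * s)
    (hTQ : T * Q = Q * T)
    (hTbQ : Tb * Q = Q * Tb)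
    (hQ1 : Q * (s * s - s * (T + Tb) + T * Tb) = 1)
    (hQ2 : (s * s - s * (T + Tb) + T * Tb) * Q = 1)
    (m : ℕ) :
    T ^ m * (gammaN n • ((s - Tb) * Q ^ ((n + 1) / 2))) =
      (gammaN n • ((s - Tb) * Q ^ ((n + 1) / 2))) * s ^ m -
        gammaN n • (∑ i ∈ Finset.range m, T ^ i * Q ^ ((n - 1) / 2) * s ^ (m - 1 - i)) := by
  obtain ⟨j, hj⟩ := hn
  have hk1 : (n + 1) / 2 = (n - 1) / 2 + 1 := by omega
  rw [hk1]
  set k := (n - 1) / 2 with hk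
  set γ := gammaN n with hγ
  have hsQpow : ∀ t : ℕ, s * Q ^ t = Q ^ t * s := fun t => (Commute.pow_right hsQ t)
  have hswap : (s - Tb) * Q ^ (k + 1) * s = ((s - Tb) * s) * Q ^ (k + 1) := by
    rw [mul_assoc, ← hsQpow (k + 1), ← mul_assoc]
  have hexp : (s - Tb) * s - T * (s - Tb) = s * s - s * (T + Tb) + T * Tb := by
    rw [hsT]; noncomm_ring
  have hsub : (s - Tb) * Q ^ (k + 1) * s - T * ((s - Tb) * Q ^ (k + 1)) = Q ^ k := by
    rw [hswap, ← mul_assoc, ← sub_mul, hexp, pow_succ' Q k, ← mul_assoc, hQ2, one_mul]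
  have base : T * ((s - Tb) * Q ^ (k + 1)) = (s - Tb) * Q ^ (k + 1) * s - Q ^ k := by
    rw [eq_sub_iff_add_eq, ← hsub]; noncomm_ring
  induction m with
  | zero => simp
  | succ m ih =>
    have hTF : T * (γ • ((s - Tb) * Q ^ (k + 1)))
        = (γ • ((s - Tb) * Q ^ (k + 1))) * s - γ • Q ^ k := by
      rw [mul_smul_comm, base, smul_sub, smul_mul_assoc]
    have hsum : (∑ i ∈ Finset.range m, T ^ i * Q ^ k * s ^ (m - 1 - i)) * s
        = ∑ i ∈ Finset.range m, T ^ i * Q ^ k * s ^ (m - i) := by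
      rw [Finset.sum_mul]
      refine Finset.sum_congr rfl fun i hi => ?_
      rw [Finset.mem_range] at hi
      rw [mul_assoc, ← pow_succ]
      congr 2
      omega
    calc T ^ (m + 1) * (γ • ((s - Tb) * Q ^ (k + 1)))
        = T ^ m * (T * (γ • ((s - Tb) * Q ^ (k + 1)))) := by
          rw [pow_succ, mul_assoc]
      _ = T ^ m * ((γ • ((s - Tb) * Q ^ (k + 1))) * s) - γ • (T ^ m * Q ^ k) := by
          rw [hTF, mul_sub, mul_smul_comm]
      _ = (T ^ m * (γ • ((s - Tb) * Q ^ (k + 1)))) * s - γ • (T ^ m * Q ^ k) := by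
          rw [mul_assoc]
      _ = ((γ • ((s - Tb) * Q ^ (k + 1))) * s ^ m
            - γ • (∑ i ∈ Finset.range m, T ^ i * Q ^ k * s ^ (m - 1 - i))) * s
            - γ • (T ^ m * Q ^ k) := by rw [ih]
      _ = (γ • ((s - Tb) * Q ^ (k + 1))) * s ^ (m + 1)
            - γ • (∑ i ∈ Finset.range (m + 1), T ^ i * Q ^ k * s ^ (m + 1 - 1 - i)) := by
          rw [Finset.sum_range_succ]
          have h0 : ∀ i ∈ Finset.range m, T ^ i * Q ^ k * s ^ (m + 1 - 1 - i)
              = T ^ i * Q ^ k * s ^ (m - i) := by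
            intro i hi
            rfl
          have h2 : (γ • (∑ i ∈ Finset.range m, T ^ i * Q ^ k * s ^ (m - 1 - i))) * s
              = γ • ((∑ i ∈ Finset.range m, T ^ i * Q ^ k * s ^ (m - 1 - i)) * s) :=
            smul_mul_assoc γ _ s
          have hm : m + 1 - 1 - m = 0 := by omega
          rw [Finset.sum_congr rfl h0, sub_mul, h2, hsum, hm, pow_zero, mul_one,
            smul_add, pow_succ s m, ← mul_assoc]
          abel
end

section
/- Abstract pseudo-resolvent identity: let R be a (possibly noncommutative) ring, let A, B, Q_s, Q_p, F_s, F_p ∈ R, and let s, p, s̄ be central-acting scalars acting on R (s real and imaginary parts commuting appropriately). Suppose F_p p − A F_p = γ Q_p, s F_s − F_s A = γ Q_s, and p² − 2s₀ p + |s|² is invertible and central, where s₀ = Re(s), s + s̄ = 2s₀, s s̄ = |s|². Then F_s F_p (p² − 2s₀ p + |s|²) = (F_s γ Q_p − γ Q_s F_p) p − s̄ (F_s γ Q_p − γ Q_s F_p). -/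
/-- Abstract pseudo-resolvent identity (algebraic core of the pseudo F-resolvent equation):
in a ring `R` (an `ℝ`-algebra), with `Fp p - A Fp = γ Qp`, `s Fs - Fs A = γ Qs`,
`s̄ = 2s₀ - s`, `s² - 2s₀ s + |s|² = 0`, and `p² - 2s₀ p + |s|²` invertible and central,
one has `Fs Fp (p² - 2s₀p + |s|²) = (Fs γ Qp - γ Qs Fp) p - s̄ (Fs γ Qp - γ Qs Fp)`. -/
theorem pseudo_resolvent_identity {R : Type*} [Ring R] [Algebra ℝ R]
    (A Qs Qp Fs Fp s p sbar : R) (s0 ns γ : ℝ)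
    (hFp : Fp * p - A * Fp = γ • Qp)
    (hFs : s * Fs - Fs * A = γ • Qs)
    (hsbar : sbar = (2 * s0) • (1 : R) - s)
    (hs : s * s - (2 * s0) • s + ns • (1 : R) = 0)
    [Invertible (p * p - (2 * s0) • p + ns • (1 : R))]
    (hcentral : ∀ r : R, (p * p - (2 * s0) • p + ns • (1 : R)) * r =
      r * (p * p - (2 * s0) • p + ns • (1 : R))) :
    Fs * Fp * (p * p - (2 * s0) • p + ns • (1 : R)) =
      (Fs * (γ • Qp) - (γ • Qs) * Fp) * p - sbar * (Fs * (γ • Qp) - (γ • Qs) * Fp) := by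
  rw [← hFp, ← hFs, hsbar, ← sub_eq_zero]
  have h : Fs * Fp * (p * p - (2 * s0) • p + ns • (1 : R)) -
      ((Fs * (Fp * p - A * Fp) - (s * Fs - Fs * A) * Fp) * p -
        ((2 * s0) • (1 : R) - s) * (Fs * (Fp * p - A * Fp) - (s * Fs - Fs * A) * Fp)) =
      (s * s - (2 * s0) • s + ns • (1 : R)) * (Fs * Fp) := by
    noncomm_ring
  rw [h, hs, zero_mul]
end
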